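/- arXiv:1804.00199 — 3 statements merged into one kernel-verified Lean document; each statement's English description precedes it below -/
import Mathlib

section
/- Let p and q be distinct odd primes. The set L = {(k mod p, k mod q) : 0 < k < pq/2, p ∤ k, q ∤ k} is a set of coset representatives for the subgroup Γ = {(1,1), (−1,−1)} in G = (ℤ/pℤ)ˣ × (ℤ/qℤ)ˣ: every coset of Γ contains exactly one element of L. -/
/-!
Identify `(ℤ/p)ˣ × (ℤ/q)ˣ` with units of `ℤ/pq` by the Chinese remainder theorem; `Γ` becomes
`{1, -1}`. For a nonzero residue `a` modulo an odd `N`, the representatives in `[0, N)` of `a` and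
`-a` are `a.val` and `N - a.val`; they are nonzero and sum to the odd number `N`, so exactly one
of them lies below `N / 2`.
-/

namespace ZMod

theorem natCast_eq_iff_eq_val {N k : ℕ} [NeZero N] (hk : k < N) (a : ZMod N) :
    (k : ZMod N) = a ↔ k = a.val := by
  constructor
  · rintro rfl
    exact (val_natCast_of_lt hk).symm
  · rintro rfl
    exact natCast_zmod_val a

theorem val_add_val_neg {N : ℕ} [NeZero N] {a : ZMod N} (ha : a ≠ 0) :
    a.val + (-a).val = N := by
  have := val_lt a
  rw [neg_val, if_neg ha]
  omega

theorem existsUnique_natCast_eq_or_eq_neg {N : ℕ} (hN : Odd N) {a : ZMod N} (ha : a ≠ 0) :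
    ∃! k : ℕ, 0 < k ∧ 2 * k < N ∧ ((k : ZMod N) = a ∨ (k : ZMod N) = -a) := by
  have : NeZero N := ⟨hN.pos.ne'⟩
  have hsum := val_add_val_neg ha
  have hlt := val_lt a
  have hval : a.val ≠ 0 := (val_ne_zero a).mpr ha
  obtain ⟨m, rfl⟩ := hN
  have hrep : ∀ k, 2 * k < 2 * m + 1 →
      ((k : ZMod (2 * m + 1)) = a ∨ (k : ZMod (2 * m + 1)) = -a ↔ k = a.val ∨ k = (-a).val) :=
    fun k hk => by
      rw [natCast_eq_iff_eq_val (by omega), natCast_eq_iff_eq_val (by omega)]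
  by_cases hsmall : 2 * a.val < 2 * m + 1
  · refine ⟨a.val, ⟨by omega, hsmall, Or.inl (natCast_zmod_val a)⟩, ?_⟩
    rintro k ⟨-, hk, hka⟩
    rcases (hrep k hk).mp hka with rfl | rfl <;> omega
  · refine ⟨(-a).val, ⟨by omega, by omega, Or.inr (natCast_zmod_val (-a))⟩, ?_⟩
    rintro k ⟨-, hk, hka⟩
    rcases (hrep k hk).mp hka with rfl | rfl <;> omega

theorem not_dvd_of_natCast_eq_or_eq_neg {p k : ℕ} {u : ZMod p} (hu : u ≠ 0)
    (h : (k : ZMod p) = u ∨ (k : ZMod p) = -u) : ¬ p ∣ k := by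
  rw [← natCast_eq_zero_iff]
  rcases h with h | h <;> simpa [h] using hu

end ZMod

/-- `L = {(k mod p, k mod q) : 0 < k < pq/2, p ∤ k, q ∤ k}` is a set of
coset representatives for `Γ = {(1,1), (-1,-1)}` in `(ℤ/p)ˣ × (ℤ/q)ˣ`: every coset
`{g, -g}` contains exactly one element of `L`. -/
theorem stmt_15 (p q : ℕ) [Fact p.Prime] [Fact q.Prime] (hpq : p ≠ q)
    (hp2 : p ≠ 2) (hq2 : q ≠ 2) :
    ∀ g : (ZMod p)ˣ × (ZMod q)ˣ, ∃! k : ℕ,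
      0 < k ∧ 2 * k < p * q ∧ ¬ p ∣ k ∧ ¬ q ∣ k ∧
        ((((k : ZMod p), (k : ZMod q)) = (((g.1 : ZMod p)), ((g.2 : ZMod q)))) ∨
         (((k : ZMod p), (k : ZMod q)) = ((-(g.1 : ZMod p)), (-(g.2 : ZMod q))))) := by
  intro g
  have hp : p.Prime := Fact.out
  have hq : q.Prime := Fact.out
  let e := ZMod.chineseRemainder ((Nat.coprime_primes hp hq).mpr hpq)
  set a := e.symm ((g.1 : ZMod p), (g.2 : ZMod q))
  have ha : a ≠ 0 := fun h => g.1.ne_zero (by simpa using congrArg Prod.fst (e.symm_apply_eq.mp h))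
  refine (existsUnique_congr fun k => ?_).mp
    (ZMod.existsUnique_natCast_eq_or_eq_neg ((hp.odd_of_ne_two hp2).mul (hq.odd_of_ne_two hq2)) ha)
  have hcast : ((k : ZMod p), (k : ZMod q)) = e k := (map_natCast e k).symm
  have hpair : ((k : ZMod (p * q)) = a ∨ (k : ZMod (p * q)) = -a) ↔
      (((k : ZMod p), (k : ZMod q)) = ((g.1 : ZMod p), (g.2 : ZMod q)) ∨
        ((k : ZMod p), (k : ZMod q)) = (-(g.1 : ZMod p), -(g.2 : ZMod q))) := by
    rw [hcast, ← e.injective.eq_iff, ← e.injective.eq_iff (b := -a), map_neg,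
      e.apply_symm_apply, Prod.neg_mk]
  rw [hpair]
  constructor
  · rintro ⟨hk0, hk, h⟩
    refine ⟨hk0, hk, ZMod.not_dvd_of_natCast_eq_or_eq_neg g.1.ne_zero ?_,
      ZMod.not_dvd_of_natCast_eq_or_eq_neg g.2.ne_zero ?_, h⟩ <;>
      simp only [Prod.mk.injEq] at h <;> tauto
  · rintro ⟨hk0, hk, -, -, h⟩
    exact ⟨hk0, hk, h⟩
end

section
/- Let p and q be distinct odd primes. Then the product in (ℤ/pℤ)ˣ of k mod p, taken over all integers k with 0 < k < pq/2, p ∤ k, and q ∤ k, equals (−1)^((q−1)/2) · (q/p), where (q/p) is the Legendre symbol of q modulo p (viewed as ±1 in (ℤ/pℤ)ˣ). -/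
/-!
Write `n = (pq - 1)/2 = b p + a = a q + b` with `p = 2a + 1`, `q = 2b + 1`. By Wilson's theorem
each full block of `p` consecutive integers contributes `-1` mod `p`, so the units of `[1, n]`
multiply to `(-1)^b a!`. Those among them divisible by `q` are `q m` for `1 ≤ m ≤ a`, with
product `q^a a!`. Dividing, the product in question is `(-1)^b q^{-a}`, and Euler's criterion
gives `q^a = (q/p) = (q/p)⁻¹`.
-/

open Finset Nat

/-- Generalized Wilson theorem. -/
theorem prod_Icc_filter_not_dvd_natCast (p : ℕ) [Fact p.Prime] (n : ℕ) :
    ∏ k ∈ Icc 1 n with ¬ p ∣ k, (k : ZMod p) = (-1) ^ (n / p) * ((n % p)! : ZMod p) := by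
  induction n with
  | zero => simp
  | succ n ih =>
    have hp : 0 < p := (Fact.out : p.Prime).pos
    have hn := Nat.div_add_mod n p
    have hn' := Nat.div_add_mod (n + 1) p
    rw [prod_filter, prod_Icc_succ_top (by omega), ← prod_filter, ih]
    by_cases h : p ∣ n + 1
    · have hmod : n % p = p - 1 := by
        rw [Nat.succ_div_of_dvd h, mul_add, Nat.mod_eq_zero_of_dvd h] at hn'
        omega
      rw [if_neg (not_not.mpr h), Nat.succ_div_of_dvd h, Nat.mod_eq_zero_of_dvd h, hmod,
        ZMod.wilsons_lemma]
      simp [pow_succ]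
    · have hmod : (n + 1) % p = n % p + 1 := by
        rw [Nat.succ_div_of_not_dvd h] at hn'
        omega
      rw [if_pos h, Nat.succ_div_of_not_dvd h, hmod, factorial_succ, Nat.cast_mul,
        ← ZMod.natCast_mod (n + 1) p, hmod]
      ring

theorem prod_Icc_filter_not_dvd_and_dvd {M : Type*} [CommMonoid M] {p q : ℕ}
    (hpq : p.Coprime q) (hq : 0 < q) (n : ℕ) (f : ℕ → M) :
    ∏ k ∈ Icc 1 n with ¬ p ∣ k ∧ q ∣ k, f k = ∏ m ∈ Icc 1 (n / q) with ¬ p ∣ m, f (q * m) := by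
  have himage : {k ∈ Icc 1 n | ¬ p ∣ k ∧ q ∣ k} = {m ∈ Icc 1 (n / q) | ¬ p ∣ m}.image (q * ·) := by
    ext k
    simp only [mem_filter, mem_Icc, mem_image]
    constructor
    · rintro ⟨⟨hk1, hkn⟩, hpk, m, rfl⟩
      refine ⟨m, ⟨⟨?_, (Nat.le_div_iff_mul_le hq).2 (by linarith)⟩, ?_⟩, rfl⟩
      · exact Nat.pos_of_ne_zero (by rintro rfl; simp at hk1)
      · rwa [← hpq.dvd_mul_left]
    · rintro ⟨m, ⟨⟨hm1, hmn⟩, hpm⟩, rfl⟩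
      have := (Nat.le_div_iff_mul_le hq).1 hmn
      exact ⟨⟨Nat.one_le_iff_ne_zero.2 (by positivity), by linarith⟩, by rwa [hpq.dvd_mul_left],
        dvd_mul_right q m⟩
  rw [himage, prod_image fun x _ y _ h => Nat.eq_of_mul_eq_mul_left hq h]

theorem prod_Icc_filter_not_dvd_and_dvd_natCast {p q : ℕ} [Fact p.Prime] (hpq : p.Coprime q)
    (hq : 0 < q) {n : ℕ} (hn : n / q < p) :
    ∏ k ∈ Icc 1 n with ¬ p ∣ k ∧ q ∣ k, (k : ZMod p) =
      (q : ZMod p) ^ (n / q) * ((n / q)! : ZMod p) := by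
  have hnot_dvd : ∀ m ∈ Icc 1 (n / q), ¬ p ∣ m := fun m hm =>
    Nat.not_dvd_of_pos_of_lt (mem_Icc.1 hm).1 (by have := (mem_Icc.1 hm).2; omega)
  rw [prod_Icc_filter_not_dvd_and_dvd hpq hq]
  simp only [Nat.cast_mul, prod_mul_distrib, prod_const]
  rw [prod_Icc_filter_not_dvd_natCast, Nat.div_eq_of_lt hn, Nat.mod_eq_of_lt hn,
    filter_true_of_mem hnot_dvd, card_Icc, pow_zero, one_mul, Nat.add_sub_cancel]

theorem eq_mul_legendreSym_of_pow_mul_eq {p q : ℕ} [Fact p.Prime] (hpq : ¬ p ∣ q)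
    {x c : ZMod p} (h : (q : ZMod p) ^ (p / 2) * x = c) : x = c * legendreSym p q := by
  have hq : ((q : ℤ) : ZMod p) ≠ 0 := by
    rwa [Int.cast_natCast, Ne, ZMod.natCast_eq_zero_iff]
  rw [← Int.cast_natCast, ← legendreSym.eq_pow] at h
  have hsq : (legendreSym p q : ZMod p) ^ 2 = 1 := by
    exact_mod_cast congrArg (Int.cast : ℤ → ZMod p) (legendreSym.sq_one p hq)
  linear_combination (-x) * hsq + (legendreSym p q : ZMod p) * h

/-- for distinct odd primes `p, q`, the product of `k mod p` over all
`0 < k < pq/2` with `p ∤ k` and `q ∤ k` equals `(-1)^((q-1)/2) · (q/p)`. -/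
theorem stmt_16 (p q : ℕ) [Fact p.Prime] [Fact q.Prime] (hpq : p ≠ q)
    (hp2 : p ≠ 2) (hq2 : q ≠ 2) :
    ∏ k ∈ (Finset.range (p * q)).filter
        (fun k => 0 < k ∧ 2 * k < p * q ∧ ¬ p ∣ k ∧ ¬ q ∣ k), (k : ZMod p) =
      (-1) ^ ((q - 1) / 2) * ((legendreSym p q : ℤ) : ZMod p) := by
  have hp : p.Prime := Fact.out
  have hq : q.Prime := Fact.out
  obtain ⟨a, hpa⟩ := hp.odd_of_ne_two hp2
  obtain ⟨b, hqb⟩ := hq.odd_of_ne_two hq2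
  obtain ⟨n, hn⟩ : ∃ n, n = b * p + a := ⟨_, rfl⟩
  have hpq_eq : p * q = 2 * n + 1 ∧ n = a * q + b := by
    subst hn hpa hqb; constructor <;> ring
  have hS : (range (p * q)).filter (fun k => 0 < k ∧ 2 * k < p * q ∧ ¬ p ∣ k ∧ ¬ q ∣ k) =
      {k ∈ Icc 1 n | ¬ p ∣ k ∧ ¬ q ∣ k} := by
    ext k; simp only [mem_filter, mem_range, mem_Icc]; omega
  have hnp : n / p = b ∧ n % p = a :=
    (Nat.div_mod_unique hp.pos).2 ⟨by rw [hn]; ring, by omega⟩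
  have hnq : n / q = a :=
    ((Nat.div_mod_unique (c := b) hq.pos).2 ⟨by rw [hpq_eq.2]; ring, by omega⟩).1
  have hsplit := prod_filter_mul_prod_filter_not {k ∈ Icc 1 n | ¬ p ∣ k} (q ∣ ·)
    (fun k => (k : ZMod p))
  rw [filter_filter, filter_filter, prod_Icc_filter_not_dvd_and_dvd_natCast
    ((Nat.coprime_primes hp hq).2 hpq) hq.pos (by omega), prod_Icc_filter_not_dvd_natCast,
    hnp.1, hnp.2, hnq] at hsplit
  have hfact : (a ! : ZMod p) ≠ 0 := by
    rw [Ne, ZMod.natCast_eq_zero_iff, hp.dvd_factorial]; omega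
  rw [hS, show (q - 1) / 2 = b by omega]
  refine eq_mul_legendreSym_of_pow_mul_eq ((Nat.prime_dvd_prime_iff_eq hp hq).not.2 hpq) ?_
  rw [show p / 2 = a by omega]
  exact mul_right_cancel₀ hfact (by linear_combination hsplit)
end

section
/- Let p and q be distinct odd primes. The product of all elements of L = {(k mod p, k mod q) : 0 < k < pq/2, p ∤ k, q ∤ k} in (ℤ/pℤ)ˣ × (ℤ/qℤ)ˣ equals ((−1)^((q−1)/2) · (q/p), (−1)^((p−1)/2) · (p/q)), where (·/·) denotes the Legendre symbol. -/
/-!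
Modulo `p`, the integers `0 < k < pq/2` prime to `p` run through `(q - 1)/2` complete systems of
units mod `p`, each with product `-1` by Wilson's theorem, followed by `1, …, (p - 1)/2`; so their
product is `(-1)^((q-1)/2) ((p-1)/2)!`. Among them the multiples of `q` are the `qj` with
`1 ≤ j ≤ (p - 1)/2`, of product `q^((p-1)/2) ((p-1)/2)!`, and `q^((p-1)/2) = (q/p)` by Euler's
criterion.
-/

open Finset Nat

theorem filter_not_dvd_range_succ_eq_Ico {p n : ℕ} (hn : n < p) :
    (range (n + 1)).filter (¬ p ∣ ·) = Ico 1 (n + 1) := by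
  ext k
  simp only [mem_filter, mem_range, mem_Ico]
  constructor
  · rintro ⟨hk, hpk⟩
    exact ⟨Nat.pos_of_ne_zero (by rintro rfl; exact hpk (dvd_zero p)), hk⟩
  · rintro ⟨hk0, hk⟩
    exact ⟨hk, fun h => (Nat.le_of_dvd hk0 h).not_gt (by omega)⟩

theorem filter_half_range_eq {p q : ℕ} (hp : Odd p) (hq : Odd q) :
    (range (p * q)).filter (fun k => 0 < k ∧ 2 * k < p * q ∧ ¬ p ∣ k ∧ ¬ q ∣ k) =
      ((range (p * (q / 2) + (p / 2 + 1))).filter (¬ p ∣ ·)).filter (¬ q ∣ ·) := by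
  obtain ⟨n, rfl⟩ := hp
  obtain ⟨m, rfl⟩ := hq
  have hhalf : ∀ k, 2 * k < (2 * n + 1) * (2 * m + 1) ↔
      k < (2 * n + 1) * ((2 * m + 1) / 2) + ((2 * n + 1) / 2 + 1) := fun k => by
    rw [show (2 * m + 1) / 2 = m by omega, show (2 * n + 1) / 2 = n by omega]
    constructor <;> intro h <;> ring_nf at * <;> omega
  ext k
  simp only [mem_filter, mem_range, hhalf]
  refine ⟨fun ⟨_, _, hk, hpk, hqk⟩ => ⟨⟨hk, hpk⟩, hqk⟩, fun ⟨⟨hk, hpk⟩, hqk⟩ => ?_⟩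
  have hk0 : k ≠ 0 := by rintro rfl; exact hpk (dvd_zero _)
  exact ⟨by have := (hhalf k).2 hk; omega, Nat.pos_of_ne_zero hk0, hk, hpk, hqk⟩

section

variable (p : ℕ) [Fact p.Prime]

theorem prod_filter_not_dvd_range_succ_of_lt {n : ℕ} (hn : n < p) :
    ∏ k ∈ (range (n + 1)).filter (¬ p ∣ ·), (k : ZMod p) = n ! := by
  rw [filter_not_dvd_range_succ_eq_Ico hn, ← Nat.cast_prod, prod_Ico_id_eq_factorial]

theorem prod_filter_not_dvd_range_self :
    ∏ k ∈ (range p).filter (¬ p ∣ ·), (k : ZMod p) = -1 := by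
  obtain ⟨n, rfl⟩ : ∃ n, p = n + 1 := ⟨p - 1, by have := (Fact.out : p.Prime).one_lt; omega⟩
  rw [prod_filter_not_dvd_range_succ_of_lt _ (lt_add_one n)]
  simpa using ZMod.wilsons_lemma (p := n + 1)

theorem prod_filter_not_dvd_range_mul_add (m r : ℕ) :
    ∏ k ∈ (range (p * m + r)).filter (¬ p ∣ ·), (k : ZMod p) =
      (-1) ^ m * ∏ k ∈ (range r).filter (¬ p ∣ ·), (k : ZMod p) := by
  simp only [prod_filter]
  induction m with
  | zero => simp
  | succ m ih =>
    have hshift : ∀ x, (if ¬ p ∣ p + x then ((p + x : ℕ) : ZMod p) else 1) =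
        if ¬ p ∣ x then (x : ZMod p) else 1 := fun x => by
      simp [Nat.dvd_add_self_left]
    rw [Nat.mul_succ, add_comm (p * m), add_assoc, prod_range_add]
    simp only [hshift, ih, ← prod_filter, prod_filter_not_dvd_range_self]
    ring

theorem prod_filter_dvd_filter_not_dvd_range {q : ℕ} (hpq : ¬ p ∣ q) {N M : ℕ}
    (hNM : ∀ j, q * j < N ↔ j < M) :
    ∏ k ∈ ((range N).filter (¬ p ∣ ·)).filter (q ∣ ·), (k : ZMod p) =
      (q : ZMod p) ^ #((range M).filter (¬ p ∣ ·)) *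
        ∏ k ∈ (range M).filter (¬ p ∣ ·), (k : ZMod p) := by
  have hq : 0 < q := Nat.pos_of_ne_zero (by rintro rfl; exact hpq (dvd_zero p))
  have hmultiples : ((range N).filter (¬ p ∣ ·)).filter (q ∣ ·) =
      ((range M).filter (¬ p ∣ ·)).image (q * ·) := by
    ext k
    simp only [mem_filter, mem_range, mem_image]
    constructor
    · rintro ⟨⟨hk, hpk⟩, j, rfl⟩
      exact ⟨j, ⟨(hNM j).1 hk, fun h => hpk (dvd_mul_of_dvd_right h q)⟩, rfl⟩
    · rintro ⟨j, ⟨hj, hpj⟩, rfl⟩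
      exact ⟨⟨(hNM j).2 hj, fun h => hpj (((Fact.out : p.Prime).dvd_mul.1 h).resolve_left hpq)⟩,
        dvd_mul_right q j⟩
  rw [hmultiples, prod_image fun a _ b _ h => Nat.eq_of_mul_eq_mul_left hq h]
  push_cast
  rw [prod_mul_distrib, prod_const]

theorem prod_filter_half_range_coprime (hp : p ≠ 2) {q : ℕ} (hq : Odd q) (hpq : ¬ p ∣ q) :
    ∏ k ∈ (range (p * q)).filter (fun k => 0 < k ∧ 2 * k < p * q ∧ ¬ p ∣ k ∧ ¬ q ∣ k),
        (k : ZMod p) =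
      (-1) ^ ((q - 1) / 2) * ((legendreSym p q : ℤ) : ZMod p) := by
  have hp_odd : Odd p := (Fact.out : p.Prime).odd_of_ne_two hp
  set n := p / 2
  have hn : n < p := Nat.div_lt_self (Fact.out : p.Prime).pos one_lt_two
  have hm : q / 2 = (q - 1) / 2 := by have := Nat.odd_iff.1 hq; omega
  set A := (range (p * (q / 2) + (n + 1))).filter (¬ p ∣ ·)
  have hmultiples : ∀ j, q * j < p * (q / 2) + (n + 1) ↔ j < n + 1 := fun j => by
    obtain ⟨a, rfl⟩ := hp_odd
    obtain ⟨b, rfl⟩ := hq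
    rw [show (2 * b + 1) / 2 = b by omega, show n = a by omega]
    constructor <;> intro h <;> ring_nf at * <;> nlinarith
  have hsplit := prod_filter_mul_prod_filter_not A (q ∣ ·) (fun k => (k : ZMod p))
  rw [prod_filter_dvd_filter_not_dvd_range p hpq hmultiples,
    prod_filter_not_dvd_range_mul_add, filter_not_dvd_range_succ_eq_Ico hn, card_Ico,
    ← filter_not_dvd_range_succ_eq_Ico hn, prod_filter_not_dvd_range_succ_of_lt p hn,
    add_tsub_cancel_right, hm] at hsplit
  have hfact : (n ! : ZMod p) ≠ 0 := by
    rw [Ne, ZMod.natCast_eq_zero_iff, (Fact.out : p.Prime).dvd_factorial]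
    omega
  have heuler : ((legendreSym p q : ℤ) : ZMod p) = (q : ZMod p) ^ n := by
    simp [legendreSym.eq_pow, n]
  have hsq : ((legendreSym p q : ℤ) : ZMod p) ^ 2 = 1 := by
    have hq0 : ((q : ℤ) : ZMod p) ≠ 0 := by
      rwa [Int.cast_natCast, Ne, ZMod.natCast_eq_zero_iff]
    exact_mod_cast congrArg (Int.cast : ℤ → ZMod p) (legendreSym.sq_one p hq0)
  rw [filter_half_range_eq hp_odd hq]
  set X := ∏ k ∈ A with ¬q ∣ k, (k : ZMod p)
  have hlegendre_mul : ((legendreSym p q : ℤ) : ZMod p) * X = (-1) ^ ((q - 1) / 2) :=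
    mul_right_cancel₀ hfact (by rw [heuler]; linear_combination hsplit)
  linear_combination (legendreSym p q : ZMod p) * hlegendre_mul - X * hsq

end

/-- the product of all elements of `L` in `ℤ/p × ℤ/q` equals
`((-1)^((q-1)/2)·(q/p), (-1)^((p-1)/2)·(p/q))`. -/
theorem stmt_17 (p q : ℕ) [Fact p.Prime] [Fact q.Prime] (hpq : p ≠ q)
    (hp2 : p ≠ 2) (hq2 : q ≠ 2) :
    ∏ k ∈ (Finset.range (p * q)).filter
        (fun k => 0 < k ∧ 2 * k < p * q ∧ ¬ p ∣ k ∧ ¬ q ∣ k),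
        (((k : ZMod p), (k : ZMod q)) : ZMod p × ZMod q) =
      ((-1) ^ ((q - 1) / 2) * ((legendreSym p q : ℤ) : ZMod p),
       (-1) ^ ((p - 1) / 2) * ((legendreSym q p : ℤ) : ZMod q)) := by
  have hp : p.Prime := Fact.out
  have hq : q.Prime := Fact.out
  have hswap : (range (p * q)).filter (fun k => 0 < k ∧ 2 * k < p * q ∧ ¬ p ∣ k ∧ ¬ q ∣ k) =
      (range (q * p)).filter (fun k => 0 < k ∧ 2 * k < q * p ∧ ¬ q ∣ k ∧ ¬ p ∣ k) := by
    simp only [Nat.mul_comm p q, and_comm (a := ¬ p ∣ _)]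
  refine Prod.ext ?_ ?_
  · rw [Prod.fst_prod]
    exact prod_filter_half_range_coprime p hp2 (hq.odd_of_ne_two hq2)
      ((Nat.prime_dvd_prime_iff_eq hp hq).not.2 hpq)
  · rw [Prod.snd_prod, hswap]
    exact prod_filter_half_range_coprime q hq2 (hp.odd_of_ne_two hp2)
      ((Nat.prime_dvd_prime_iff_eq hq hp).not.2 (Ne.symm hpq))
end
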